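/- Let (u,v,w) be a G₂-frame in ℝ⁷ (orthonormal with φ₀(u,v,w)=0) and R = χ(u,v,w). Then the 4-dimensional subspace 𝕍 = span{u, v, w, R} is coassociative: φ₀(x,y,z) = 0 for all x, y, z ∈ 𝕍. -/

import Mathlib

/-!
φ₀ is an alternating 3-form, so it vanishes on span{u, v, w, R} as soon as it vanishes on the
four triples (u, v, w), (u, v, R), (u, w, R), (v, w, R). The first is the hypothesis. Since χ is
invariant under cyclic permutations, the other three are, up to order, instances of
φ₀(a, b, χ(a, b, c)) = 0, i.e. a × b ⟂ χ(a, b, c), a polynomial identity valid for all a, b, c.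
-/

open scoped RealInnerProductSpace

noncomputable section

/-- ℝ⁷ with its Euclidean inner product. -/
abbrev V7 := EuclideanSpace ℝ (Fin 7)

/-- The standard G₂ 3-form φ₀ = e¹²³+e¹⁴⁵+e¹⁶⁷+e²⁴⁶−e²⁵⁷−e³⁴⁷−e³⁵⁶ on ℝ⁷
(indices shifted to 0-based), written as a trilinear alternating function. -/
def phi0 : (Fin 3 → V7) → ℝ := fun v =>
  let m : Fin 7 → Fin 7 → Fin 7 → ℝ := fun i j k =>
    Matrix.det !![v 0 i, v 0 j, v 0 k; v 1 i, v 1 j, v 1 k; v 2 i, v 2 j, v 2 k]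
  m 0 1 2 + m 0 3 4 + m 0 5 6 + m 1 3 5 - m 1 4 6 - m 2 3 6 - m 2 4 5

/-- The 4-form ∗φ₀ = e⁴⁵⁶⁷+e²³⁶⁷+e²³⁴⁵+e¹³⁵⁷−e¹³⁴⁶−e¹²⁵⁶−e¹²⁴⁷ (0-based indices). -/
def starPhi0 : (Fin 4 → V7) → ℝ := fun v =>
  let m : Fin 7 → Fin 7 → Fin 7 → Fin 7 → ℝ := fun i j k l =>
    Matrix.det !![v 0 i, v 0 j, v 0 k, v 0 l; v 1 i, v 1 j, v 1 k, v 1 l;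
                  v 2 i, v 2 j, v 2 k, v 2 l; v 3 i, v 3 j, v 3 k, v 3 l]
  m 3 4 5 6 + m 1 2 5 6 + m 1 2 3 4 + m 0 2 4 6 - m 0 2 3 5 - m 0 1 4 5 - m 0 1 3 6

/-- The cross product on ℝ⁷: the unique vector with ⟨u×v, z⟩ = φ₀(u,v,z) for all z. -/
def cross (u v : V7) : V7 := WithLp.toLp 2 (fun i => phi0 ![u, v, EuclideanSpace.single i 1])

/-- The triple cross product χ: the unique vector with ⟨χ(u,v,w), z⟩ = ∗φ₀(u,v,w,z). -/
def chi (u v w : V7) : V7 := WithLp.toLp 2 (fun i => starPhi0 ![u, v, w, EuclideanSpace.single i 1])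

/-- Interior product ξ⌟α : contraction of a (k+1)-form with ξ in its first slot. -/
def iprod {k : ℕ} (ξ : V7) (α : (Fin (k + 1) → V7) → ℝ) : (Fin k → V7) → ℝ :=
  fun v => α (Fin.cons ξ v)

/-- Wedge product of alternating forms (determinant convention). -/
def wedge {p q : ℕ} (α : (Fin p → V7) → ℝ) (β : (Fin q → V7) → ℝ) :
    (Fin (p + q) → V7) → ℝ := fun v =>
  (1 / ((p.factorial : ℝ) * q.factorial)) *
    ∑ σ : Equiv.Perm (Fin (p + q)), ((Equiv.Perm.sign σ : ℤ) : ℝ) *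
      α (fun i => v (σ (Fin.castAdd q i))) * β (fun j => v (σ (Fin.natAdd p j)))

/-- The dual covector ξ^# = ⟨ξ,·⟩, as a 1-form. -/
def dualCov (ξ : V7) : (Fin 1 → V7) → ℝ := fun v => ⟪ξ, v 0⟫

/-- The standard volume form e¹∧⋯∧e⁷ on ℝ⁷. -/
def vol7 : (Fin 7 → V7) → ℝ := fun v => Matrix.det (Matrix.of fun i j => v i j)

theorem MultilinearMap.map_eq_zero_of_forall_mem_span {R M N ι : Type*} [CommSemiring R]
    [AddCommMonoid M] [Module R M] [AddCommMonoid N] [Module R N] [Fintype ι]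
    (f : MultilinearMap R (fun _ : ι => M) N) {s : Set M}
    (hf : ∀ v : ι → M, (∀ i, v i ∈ s) → f v = 0) {v : ι → M}
    (hv : ∀ i, v i ∈ Submodule.span R s) : f v = 0 := by
  classical
  choose n c g hg using fun i => Submodule.mem_span_set'.1 (hv i)
  rw [← funext hg, f.map_sum]
  refine Finset.sum_eq_zero fun r _ => ?_
  rw [f.map_smul_univ, hf _ fun i => (g i (r i)).2, smul_zero]

section Alternating

variable {R M N κ : Type*} [CommRing R] [AddCommGroup M] [Module R M] [AddCommGroup N]
  [Module R N] [LinearOrder κ] {n : ℕ}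

theorem AlternatingMap.map_comp_eq_zero_of_forall_strictMono (f : M [⋀^Fin n]→ₗ[R] N)
    {b : κ → M} (hb : ∀ σ : Fin n → κ, StrictMono σ → f (b ∘ σ) = 0) (σ : Fin n → κ) :
    f (b ∘ σ) = 0 := by
  by_cases hσ : Function.Injective σ
  · have hsorted : StrictMono (σ ∘ Tuple.sort σ) :=
      (Tuple.monotone_sort σ).strictMono_of_injective (hσ.comp (Tuple.sort σ).injective)
    have hperm := f.map_perm (b ∘ σ) (Tuple.sort σ)
    rwa [Function.comp_assoc, hb _ hsorted, eq_comm, smul_eq_zero_iff_eq] at hperm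
  · exact f.map_eq_zero_of_not_injective _ fun h => hσ h.of_comp

theorem AlternatingMap.map_eq_zero_of_mem_span_range (f : M [⋀^Fin n]→ₗ[R] N) {b : κ → M}
    (hb : ∀ σ : Fin n → κ, StrictMono σ → f (b ∘ σ) = 0) {v : Fin n → M}
    (hv : ∀ i, v i ∈ Submodule.span R (Set.range b)) : f v = 0 := by
  refine f.toMultilinearMap.map_eq_zero_of_forall_mem_span (fun v hv => ?_) hv
  choose σ hσ using hv
  rw [← funext hσ]
  exact f.map_comp_eq_zero_of_forall_strictMono hb σ

end Alternating

theorem Fin.strictMono_three_four_cases {σ : Fin 3 → Fin 4} (hσ : StrictMono σ) :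
    σ = ![0, 1, 2] ∨ σ = ![0, 1, 3] ∨ σ = ![0, 2, 3] ∨ σ = ![1, 2, 3] :=
  have key : ∀ σ : Fin 3 → Fin 4, σ 0 < σ 1 → σ 1 < σ 2 →
      σ = ![0, 1, 2] ∨ σ = ![0, 1, 3] ∨ σ = ![0, 2, 3] ∨ σ = ![1, 2, 3] := by decide
  key σ (hσ (by decide)) (hσ (by decide))

theorem Matrix.det_fin_four {R : Type*} [CommRing R] (A : Matrix (Fin 4) (Fin 4) R) :
    A.det =
      A 0 0 * (A 1 1 * A 2 2 * A 3 3 - A 1 1 * A 2 3 * A 3 2 - A 1 2 * A 2 1 * A 3 3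
        + A 1 2 * A 2 3 * A 3 1 + A 1 3 * A 2 1 * A 3 2 - A 1 3 * A 2 2 * A 3 1)
      - A 0 1 * (A 1 0 * A 2 2 * A 3 3 - A 1 0 * A 2 3 * A 3 2 - A 1 2 * A 2 0 * A 3 3
        + A 1 2 * A 2 3 * A 3 0 + A 1 3 * A 2 0 * A 3 2 - A 1 3 * A 2 2 * A 3 0)
      + A 0 2 * (A 1 0 * A 2 1 * A 3 3 - A 1 0 * A 2 3 * A 3 1 - A 1 1 * A 2 0 * A 3 3
        + A 1 1 * A 2 3 * A 3 0 + A 1 3 * A 2 0 * A 3 1 - A 1 3 * A 2 1 * A 3 0)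
      - A 0 3 * (A 1 0 * A 2 1 * A 3 2 - A 1 0 * A 2 2 * A 3 1 - A 1 1 * A 2 0 * A 3 2
        + A 1 1 * A 2 2 * A 3 0 + A 1 2 * A 2 0 * A 3 1 - A 1 2 * A 2 1 * A 3 0) := by
  rw [det_succ_row_zero]
  simp only [Fin.sum_univ_four, det_fin_three, submatrix_apply, Fin.succAbove, Fin.reduceSucc,
    Fin.reduceCastSucc, Fin.reduceLT, Fin.isValue, ↓reduceIte, Fin.coe_ofNat_eq_mod]
  ring

/-- The elementary form `e^{c 0} ∧ ⋯ ∧ e^{c (k-1)}`. -/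
def EuclideanSpace.coordForm {ι : Type*} {k : ℕ} (c : Fin k → ι) :
    EuclideanSpace ℝ ι [⋀^Fin k]→ₗ[ℝ] ℝ :=
  Matrix.detRowAlternating.compLinearMap
    (LinearMap.pi fun r => (EuclideanSpace.proj (c r) : EuclideanSpace ℝ ι →L[ℝ] ℝ).toLinearMap)

theorem EuclideanSpace.coordForm_apply {ι : Type*} {k : ℕ} (c : Fin k → ι)
    (v : Fin k → EuclideanSpace ℝ ι) : coordForm c v = (Matrix.of fun r s => v r (c s)).det :=
  rfl

open EuclideanSpace in
def phi0Form : V7 [⋀^Fin 3]→ₗ[ℝ] ℝ :=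
  coordForm ![0, 1, 2] + coordForm ![0, 3, 4] + coordForm ![0, 5, 6] + coordForm ![1, 3, 5]
    - coordForm ![1, 4, 6] - coordForm ![2, 3, 6] - coordForm ![2, 4, 5]

theorem phi0Form_apply (v : Fin 3 → V7) : phi0Form v = phi0 v := by
  simp only [phi0Form, phi0, AlternatingMap.add_apply, AlternatingMap.sub_apply,
    EuclideanSpace.coordForm_apply]
  congr <;> ext r s <;> fin_cases r <;> fin_cases s <;> rfl

open EuclideanSpace in
def starPhi0Form : V7 [⋀^Fin 4]→ₗ[ℝ] ℝ :=
  coordForm ![3, 4, 5, 6] + coordForm ![1, 2, 5, 6] + coordForm ![1, 2, 3, 4]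
    + coordForm ![0, 2, 4, 6] - coordForm ![0, 2, 3, 5] - coordForm ![0, 1, 4, 5]
    - coordForm ![0, 1, 3, 6]

theorem starPhi0Form_apply (v : Fin 4 → V7) : starPhi0Form v = starPhi0 v := by
  simp only [starPhi0Form, starPhi0, AlternatingMap.add_apply, AlternatingMap.sub_apply,
    EuclideanSpace.coordForm_apply]
  congr <;> ext r s <;> fin_cases r <;> fin_cases s <;> rfl

theorem chi_cyclic (u v w : V7) : chi v w u = chi u v w := by
  ext i
  simp only [chi, ← starPhi0Form_apply]
  have hcycle : ![v, w, u, EuclideanSpace.single i 1] =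
      (![u, v, w, EuclideanSpace.single i 1] ∘ Equiv.swap 0 1) ∘ Equiv.swap 1 2 := by
    funext j; fin_cases j <;> rfl
  rw [hcycle, starPhi0Form.map_swap _ (by decide), starPhi0Form.map_swap _ (by decide), neg_neg]

theorem phi0Form_chi (u v w : V7) : phi0Form ![u, v, chi u v w] = 0 := by
  rw [phi0Form_apply]
  simp only [phi0, chi, starPhi0, Matrix.det_fin_three, Matrix.det_fin_four, Matrix.of_apply,
    Matrix.cons_val', Matrix.cons_val_zero, Matrix.cons_val_one, Matrix.cons_val,
    Matrix.cons_val_fin_one, PiLp.single_apply, Fin.isValue, Fin.reduceEq, ↓reduceIte]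
  ring

theorem coassociative_V_general (u v w : V7) (hφ : phi0 ![u, v, w] = 0) :
    ∀ x ∈ Submodule.span ℝ ({u, v, w, chi u v w} : Set V7),
    ∀ y ∈ Submodule.span ℝ ({u, v, w, chi u v w} : Set V7),
    ∀ z ∈ Submodule.span ℝ ({u, v, w, chi u v w} : Set V7),
      phi0 ![x, y, z] = 0 := by
  have hb : ∀ σ : Fin 3 → Fin 4, StrictMono σ → phi0Form (![u, v, w, chi u v w] ∘ σ) = 0 := by
    intro σ hσ
    obtain rfl | rfl | rfl | rfl := Fin.strictMono_three_four_cases hσ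
    · rw [phi0Form_apply, ← hφ]
      congr 1; funext j; fin_cases j <;> rfl
    · convert phi0Form_chi u v w using 2
      funext j; fin_cases j <;> rfl
    · rw [← neg_eq_zero, ← phi0Form.map_swap _ (show (0 : Fin 3) ≠ 1 by decide),
        chi_cyclic w u v]
      convert phi0Form_chi w u v using 2
      funext j; fin_cases j <;> rfl
    · rw [← chi_cyclic u v w]
      convert phi0Form_chi v w u using 2
      funext j; fin_cases j <;> rfl
  have hrange : Set.range ![u, v, w, chi u v w] = {u, v, w, chi u v w} := by
    simp only [Matrix.range_cons, Matrix.range_empty, Set.union_empty, Set.singleton_union]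
  intro x hx y hy z hz
  rw [← phi0Form_apply]
  refine phi0Form.map_eq_zero_of_mem_span_range hb fun i => ?_
  rw [hrange]
  fin_cases i <;> assumption

/-- for a G₂-frame (u,v,w) and R = χ(u,v,w), the 4-plane
𝕍 = span{u,v,w,R} is coassociative: φ₀ vanishes on it. -/
theorem coassociative_V (u v w : V7) (h : Orthonormal ℝ ![u, v, w])
    (hφ : phi0 ![u, v, w] = 0) :
    ∀ x ∈ Submodule.span ℝ ({u, v, w, chi u v w} : Set V7),
    ∀ y ∈ Submodule.span ℝ ({u, v, w, chi u v w} : Set V7),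
    ∀ z ∈ Submodule.span ℝ ({u, v, w, chi u v w} : Set V7),
      phi0 ![x, y, z] = 0 :=
  coassociative_V_general u v w hφ

end
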